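/- arXiv:2501.03704 — 8 statements merged into one kernel-verified Lean document; each statement's English description precedes it below -/
import Mathlib

section
/- The Cauchy determinant identity: det(1/(1 - a_j b_k))_{j,k=1}^n = V(a) · V(b) · ∏_{j,k=1}^n 1/(1 - a_j b_k), where V denotes the Vandermonde determinant. -/
/-!
Multiplying row `j` of the Cauchy matrix by `∏ₗ (1 - a j * b l)` turns the entry `(j, k)` into
`p_k(a j)`, where `p_k = ∏_{l ≠ k} (1 - b l X)` (`cauchyPoly b k`) has degree `< n`; so the
cleared matrix factors as `V(a) * E` with `E` the coefficient matrix of the `p_k`. To see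
`det E = V(b)`, multiply `E` by the projective Vandermonde matrix of `(1, b)`: this evaluates the
homogenized `p_k` at `(1, b j)`, giving `∏_{l ≠ k} (b j - b l)`, which vanishes off the diagonal.
Comparing determinants and cancelling `∏_{i < j} (b i - b j)` gives the claim for injective `b`;
otherwise both sides vanish.
-/

open Finset Polynomial Matrix

namespace Matrix

variable {R : Type*} [CommRing R] {n : ℕ}

theorem projVandermonde_mul_of_coeff (v w : Fin n → R) (p : Fin n → R[X]) :
    projVandermonde v w * of (fun i k : Fin n => (p k).coeff i) =
      of fun j k => MvPolynomial.eval ![v j, w j] ((p k).homogenize (n - 1)) := by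
  ext j k
  obtain ⟨m, rfl⟩ : ∃ m, n = m + 1 := Nat.exists_eq_add_one.mpr (Fin.pos j)
  simp only [mul_apply, of_apply, projVandermonde_apply, homogenize, MvPolynomial.eval_sum,
    MvPolynomial.eval_monomial, Nat.sum_antidiagonal_eq_sum_range_succ_mk, Nat.add_sub_cancel,
    ← Fin.sum_univ_eq_sum_range]
  refine sum_congr rfl fun i _ => ?_
  simp [Fin.val_rev, Finsupp.prod_fintype, mul_comm]

theorem vandermonde_mul_of_coeff (v : Fin n → R) (p : Fin n → R[X])
    (hp : ∀ k, (p k).natDegree < n) :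
    vandermonde v * of (fun i k : Fin n => (p k).coeff i) = of fun j k => (p k).eval (v j) := by
  rw [vandermonde_eq_projVandermonde, projVandermonde_mul_of_coeff]
  ext j k
  exact eval₂_homogenize_of_eq_one (Nat.le_sub_one_of_lt (hp k)) _ _ rfl

theorem det_projVandermonde_one (v : Fin n → R) :
    (projVandermonde 1 v).det = ∏ i : Fin n, ∏ j ∈ Ioi i, (v i - v j) := by
  simp [det_projVandermonde]

end Matrix

namespace Polynomial

theorem homogenize_prod_one_sub_C_mul_X {R ι : Type*} [CommRing R] (s : Finset ι) (c : ι → R) :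
    (∏ l ∈ s, (1 - C (c l) * X)).homogenize #s =
      ∏ l ∈ s, (MvPolynomial.X 1 - MvPolynomial.C (c l) * MvPolynomial.X 0) := by
  rw [card_eq_sum_ones, homogenize_finsetProd fun l _ => by compute_degree]
  refine prod_congr rfl fun l _ => ?_
  simp

end Polynomial

section Cauchy

variable {R : Type*} [CommRing R] {n : ℕ}

noncomputable def cauchyPoly (b : Fin n → R) (k : Fin n) : R[X] :=
  ∏ l ∈ {k}ᶜ, (1 - C (b l) * X)

theorem natDegree_cauchyPoly_lt (b : Fin n → R) (k : Fin n) : (cauchyPoly b k).natDegree < n := by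
  calc (cauchyPoly b k).natDegree ≤ ∑ l ∈ {k}ᶜ, (1 - C (b l) * X : R[X]).natDegree :=
        natDegree_prod_le _ _
    _ ≤ ∑ _l ∈ ({k}ᶜ : Finset (Fin n)), 1 := sum_le_sum fun l _ => by compute_degree
    _ < n := by simpa [card_compl] using Fin.pos k

theorem eval_cauchyPoly (b : Fin n → R) (k : Fin n) (x : R) :
    (cauchyPoly b k).eval x = ∏ l ∈ {k}ᶜ, (1 - x * b l) := by
  simp [cauchyPoly, eval_prod, mul_comm (b _) x]

theorem eval_homogenize_cauchyPoly (b : Fin n → R) (k : Fin n) (y : R) :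
    MvPolynomial.eval ![1, y] ((cauchyPoly b k).homogenize (n - 1)) =
      ∏ l ∈ {k}ᶜ, (y - b l) := by
  have hcard : #({k}ᶜ : Finset (Fin n)) = n - 1 := by simp [card_compl]
  rw [cauchyPoly, ← hcard, homogenize_prod_one_sub_C_mul_X]
  simp

theorem projVandermonde_one_mul_of_coeff_cauchyPoly (b : Fin n → R) :
    projVandermonde 1 b * of (fun i k : Fin n => (cauchyPoly b k).coeff i) =
      diagonal fun k => ∏ l ∈ {k}ᶜ, (b k - b l) := by
  rw [projVandermonde_mul_of_coeff]
  ext j k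
  rw [of_apply, Pi.one_apply, eval_homogenize_cauchyPoly]
  rcases eq_or_ne j k with rfl | hjk
  · rw [diagonal_apply_eq]
  · rw [diagonal_apply_ne _ hjk]
    exact prod_eq_zero (by simpa using hjk) (sub_self _)

theorem prod_prod_compl_sub_eq_det_mul_det (b : Fin n → R) :
    ∏ k, ∏ l ∈ {k}ᶜ, (b k - b l) = (projVandermonde 1 b).det * (vandermonde b).det := by
  rw [det_projVandermonde_one, det_vandermonde, ← prod_mul_distrib,
    ← prod_prod_Ioi_mul_eq_prod_prod_off_diag]
  simp only [prod_mul_distrib]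

theorem det_of_coeff_cauchyPoly [IsDomain R] {b : Fin n → R} (hb : Function.Injective b) :
    (of fun i k : Fin n => (cauchyPoly b k).coeff i).det = (vandermonde b).det := by
  have hne : (projVandermonde 1 b).det ≠ 0 := by
    rw [det_projVandermonde_one]
    exact prod_ne_zero_iff.mpr fun i _ => prod_ne_zero_iff.mpr fun j hj =>
      sub_ne_zero.mpr (hb.ne (mem_Ioi.mp hj).ne)
  apply mul_left_cancel₀ hne
  rw [← det_mul, projVandermonde_one_mul_of_coeff_cauchyPoly, det_diagonal,
    prod_prod_compl_sub_eq_det_mul_det]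

theorem det_of_inv_one_sub_mul {K : Type*} [Field K] (a b : Fin n → K)
    (h : ∀ j k, a j * b k ≠ 1) :
    (of fun j k => (1 - a j * b k)⁻¹).det =
      (vandermonde a).det * (vandermonde b).det * ∏ j, ∏ k, (1 - a j * b k)⁻¹ := by
  by_cases hb : Function.Injective b
  · set E := of fun i k : Fin n => (cauchyPoly b k).coeff i
    have hrow : of (fun j k => (1 - a j * b k)⁻¹) =
        of fun j k => (∏ l, (1 - a j * b l))⁻¹ * (vandermonde a * E) j k := by
      ext j k
      have hrest : ∏ l ∈ {k}ᶜ, (1 - a j * b l) ≠ 0 :=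
        prod_ne_zero_iff.mpr fun l _ => sub_ne_zero.mpr (h j l).symm
      rw [vandermonde_mul_of_coeff a _ (natDegree_cauchyPoly_lt b), of_apply, of_apply, of_apply,
        eval_cauchyPoly, Fintype.prod_eq_mul_prod_compl k, mul_inv, mul_assoc,
        inv_mul_cancel₀ hrest, mul_one]
    rw [hrow, det_mul_column (fun j => (∏ l, (1 - a j * b l))⁻¹) (vandermonde a * E), det_mul,
      det_of_coeff_cauchyPoly hb]
    simp only [prod_inv_distrib]
    ring
  · obtain ⟨k, k', hbk, hkk'⟩ := Function.not_injective_iff.mp hb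
    rw [det_zero_of_column_eq hkk' fun j => by simp [hbk],
      det_vandermonde_eq_zero_iff.mpr ⟨k, k', hbk, hkk'⟩]
    ring

end Cauchy

theorem cauchy_determinant_identity (n : ℕ) (a b : Fin n → ℂ)
    (h : ∀ j k, a j * b k ≠ 1) :
    Matrix.det (Matrix.of fun j k : Fin n => (1 - a j * b k)⁻¹) =
      (∏ j : Fin n, ∏ k ∈ univ.filter (fun k => j < k), (a k - a j)) *
      (∏ j : Fin n, ∏ k ∈ univ.filter (fun k => j < k), (b k - b j)) *
      ∏ j : Fin n, ∏ k : Fin n, (1 - a j * b k)⁻¹ := by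
  simp only [filter_lt_eq_Ioi, ← det_vandermonde]
  exact det_of_inv_one_sub_mul a b h
end

section
/- For 0 ≤ r < 1 and θ ∈ ℝ, (1/(2π)) ∫_{-π/2}^{π/2} P(r, θ - t) dt = 1/2 + (1/π) · arctan( (2r/(1 - r^2)) · cos θ ), where P is the Poisson kernel. -/
/-!
Since `P(r, ·)` has the elementary primitive `s ↦ s + 2 arctan (r sin s / (1 - r cos s))`,
the integral is a difference of two values of it at `θ ± π/2`. With `x = r cos θ`,
`y = r sin θ` these are `θ ± π/2 ± 2 arctan (x / (1 ± y))`, and the arctangent addition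
formula merges the two arctangents into `arctan (2x / (1 - x² - y²))`, where `x² + y² = r²`.
-/

open Real

noncomputable def unitDiskPoissonKernel (r t : ℝ) : ℝ :=
  (1 - r ^ 2) / (1 - 2 * r * cos t + r ^ 2)

section

variable {r : ℝ}

lemma one_sub_mul_cos_pos (hr : |r| < 1) (s : ℝ) : 0 < 1 - r * cos s := by
  have := neg_abs_le r
  have := le_abs_self r
  nlinarith [cos_le_one s, neg_one_le_cos s]

lemma unitDiskPoissonKernel_denom_pos (hr : |r| < 1) (s : ℝ) :
    0 < 1 - 2 * r * cos s + r ^ 2 := by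
  nlinarith [one_sub_mul_cos_pos hr s, cos_sq_le_one s, sq_nonneg (r - cos s)]

lemma continuous_unitDiskPoissonKernel (hr : |r| < 1) : Continuous (unitDiskPoissonKernel r) :=
  continuous_const.div (by fun_prop) fun s => (unitDiskPoissonKernel_denom_pos hr s).ne'

lemma hasDerivAt_unitDiskPoissonKernel_primitive (hr : |r| < 1) (s : ℝ) :
    HasDerivAt (fun s => s + 2 * arctan (r * sin s / (1 - r * cos s)))
      (unitDiskPoissonKernel r s) s := by
  have hc := one_sub_mul_cos_pos hr s
  have hD := unitDiskPoissonKernel_denom_pos hr s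
  have hquot : HasDerivAt (fun s => r * sin s / (1 - r * cos s))
      ((r * cos s * (1 - r * cos s) - r * sin s * (r * sin s)) / (1 - r * cos s) ^ 2) s := by
    have hnum := (hasDerivAt_sin s).const_mul r
    have hden : HasDerivAt (fun s => 1 - r * cos s) (r * sin s) s := by
      simpa using ((hasDerivAt_cos s).const_mul r).const_sub 1
    exact hnum.div hden hc.ne'
  refine ((hasDerivAt_id' s).add (hquot.arctan.const_mul 2)).congr_deriv ?_
  have hsc := sin_sq_add_cos_sq s
  rw [unitDiskPoissonKernel]
  field_simp
  linear_combination -r ^ 2 * (2 - 2 * r * cos s) * hsc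

lemma integral_unitDiskPoissonKernel (hr : |r| < 1) (a b : ℝ) :
    ∫ s in a..b, unitDiskPoissonKernel r s =
      (b + 2 * arctan (r * sin b / (1 - r * cos b))) -
        (a + 2 * arctan (r * sin a / (1 - r * cos a))) :=
  intervalIntegral.integral_eq_sub_of_hasDerivAt
    (fun s _ => hasDerivAt_unitDiskPoissonKernel_primitive hr s)
    ((continuous_unitDiskPoissonKernel hr).intervalIntegrable a b)

end

lemma arctan_div_one_add_add_arctan_div_one_sub {x y : ℝ} (h : x ^ 2 + y ^ 2 < 1) :
    arctan (x / (1 + y)) + arctan (x / (1 - y)) = arctan (2 * x / (1 - x ^ 2 - y ^ 2)) := by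
  have hy : 0 < 1 - y ^ 2 := by nlinarith [sq_nonneg x]
  have hp : 0 < 1 + y := by nlinarith [sq_nonneg (1 + y)]
  have hm : 0 < 1 - y := by nlinarith [sq_nonneg (1 - y)]
  have hprod : x / (1 + y) * (x / (1 - y)) = x ^ 2 / (1 - y ^ 2) := by
    field_simp
    ring
  rw [arctan_add (by rw [hprod, div_lt_one hy]; linarith)]
  congr 1
  field_simp
  ring

theorem poisson_integral_half_arc (r θ : ℝ) (hr0 : 0 ≤ r) (hr1 : r < 1) :
    (1 / (2 * π)) * ∫ t in (-(π / 2))..(π / 2),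
        (1 - r ^ 2) / (1 - 2 * r * Real.cos (θ - t) + r ^ 2) =
      1 / 2 + (1 / π) * Real.arctan ((2 * r / (1 - r ^ 2)) * Real.cos θ) := by
  have hr : |r| < 1 := abs_lt.mpr ⟨by linarith, hr1⟩
  have hxy : (r * cos θ) ^ 2 + (r * sin θ) ^ 2 = r ^ 2 := by
    linear_combination r ^ 2 * cos_sq_add_sin_sq θ
  have hsum : arctan (r * cos θ / (1 + r * sin θ)) + arctan (r * cos θ / (1 - r * sin θ)) =
      arctan (2 * r / (1 - r ^ 2) * cos θ) := by
    rw [arctan_div_one_add_add_arctan_div_one_sub (by nlinarith), sub_sub, hxy]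
    congr 1
    ring
  change (1 / (2 * π)) * ∫ t in (-(π / 2))..(π / 2), unitDiskPoissonKernel r (θ - t) = _
  rw [intervalIntegral.integral_comp_sub_left (unitDiskPoissonKernel r),
    integral_unitDiskPoissonKernel hr, sub_neg_eq_add, sin_add_pi_div_two, cos_add_pi_div_two,
    sin_sub_pi_div_two, cos_sub_pi_div_two, mul_neg, mul_neg, sub_neg_eq_add, neg_div,
    arctan_neg, ← hsum]
  field_simp
  ring
end

section
/- For z, w in the open unit disk, ∫_{-π}^{π} s(z,t) · conj(s(w,t)) dt/(2π) = 1/(1 - z·conj(w)), i.e., the Szegő kernel boundary integral reproduces the Szegő kernel of the disk. -/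
/-!
On the unit circle ζ = e^{it} the first factor is ζ / (ζ - z) and the conjugated second factor
is g(ζ) = (1 - w̄ ζ)⁻¹, which is holomorphic on a neighbourhood of the closed disk because
|w| < 1. The normalized integral is therefore the circle average of ζ / (ζ - z) · g(ζ), which by
the Cauchy integral formula equals g(z) = (1 - z w̄)⁻¹.
-/

open Complex Real Metric

lemma circleAverage_eq_integral_neg_pi_pi {E : Type*} [NormedAddCommGroup E] [NormedSpace ℝ E]
    (f : ℂ → E) (c : ℂ) (R : ℝ) :
    circleAverage f c R = (2 * π)⁻¹ • ∫ θ in (-π)..π, f (circleMap c R θ) := by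
  rw [circleAverage_eq_integral_add (-π), intervalIntegral.integral_comp_add_right
    (fun θ ↦ f (circleMap c R θ))]
  ring_nf

lemma one_sub_mul_ne_zero_of_norm_lt_one {A : Type*} [NormedRing A] [NormOneClass A] {b ζ : A}
    (hb : ‖b‖ < 1) (hζ : ‖ζ‖ ≤ 1) : 1 - b * ζ ≠ 0 := by
  have : ‖b * ζ‖ < 1 :=
    (norm_mul_le b ζ).trans_lt ((mul_le_of_le_one_right (norm_nonneg b) hζ).trans_lt hb)
  intro h
  rw [← sub_eq_zero.mp h, norm_one] at this
  exact lt_irrefl 1 this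

lemma diffContOnCl_inv_one_sub_mul {b : ℂ} (hb : ‖b‖ < 1) :
    DiffContOnCl ℂ (fun ζ ↦ (1 - b * ζ)⁻¹) (ball 0 1) := by
  refine DifferentiableOn.diffContOnCl fun ζ hζ ↦ ?_
  rw [closure_ball 0 one_ne_zero, mem_closedBall_zero_iff] at hζ
  exact ((differentiableAt_const 1).sub ((differentiableAt_const b).mul differentiableAt_id)).inv
    (one_sub_mul_ne_zero_of_norm_lt_one hb hζ) |>.differentiableWithinAt

lemma inv_one_sub_mul_exp_neg_mul_I (z : ℂ) (t : ℝ) :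
    (1 - z * exp (-(t : ℂ) * I))⁻¹ = circleMap 0 1 t / (circleMap 0 1 t - z) := by
  rw [circleMap_zero, ofReal_one, one_mul, neg_mul, Complex.exp_neg, ← div_eq_mul_inv,
    one_sub_div (Complex.exp_ne_zero _), inv_div]

lemma conj_inv_one_sub_mul_exp_neg_mul_I (w : ℂ) (t : ℝ) :
    (starRingEnd ℂ) ((1 - w * exp (-(t : ℂ) * I))⁻¹) =
      (1 - (starRingEnd ℂ) w * circleMap 0 1 t)⁻¹ := by
  rw [map_inv₀, map_sub, map_one, map_mul, ← exp_conj, circleMap_zero]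
  simp

theorem szego_boundary_integral (z w : ℂ) (hz : ‖z‖ < 1)
    (hw : ‖w‖ < 1) :
    (∫ t in (-π)..π,
        (1 - z * Complex.exp (-(t : ℂ) * Complex.I))⁻¹ *
          (starRingEnd ℂ) ((1 - w * Complex.exp (-(t : ℂ) * Complex.I))⁻¹))
        / (2 * (π : ℂ)) =
      (1 - z * (starRingEnd ℂ) w)⁻¹ := by
  have hg : DiffContOnCl ℂ (fun ζ ↦ (1 - (starRingEnd ℂ) w * ζ)⁻¹) (ball 0 |1|) := by
    rw [abs_one]
    exact diffContOnCl_inv_one_sub_mul (by simpa using hw)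
  have hmean := hg.circleAverage_smul_div (by simpa using hz)
  simp only [circleAverage_eq_integral_neg_pi_pi, sub_zero, smul_eq_mul] at hmean
  simp only [conj_inv_one_sub_mul_exp_neg_mul_I]
  simp only [inv_one_sub_mul_exp_neg_mul_I]
  rw [mul_comm z, ← hmean, Complex.real_smul]
  push_cast
  ring
end

section
/- For z, w in the open unit disk and n ≥ 1, if F_n = (1/n) Σ_{k=0}^{n-1} δ_{2kπ/n} is the uniform atomic measure on n-th roots of unity angles, then ∫ s(z,t) conj(s(w,t)) F_n(dt) = (1/((1-z^n)(1-conj(w)^n))) · (1-(z·conj(w))^n)/(1-z·conj(w)). -/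
open Complex Real Finset

/-! With `ρ = exp (2πi/n)` the nodes are `exp (-2πik/n) = ρ⁻ᵏ`, and conjugation turns the second
factor into `(1 - u ρᵏ)⁻¹` with `u = conj w`. Since `(z ρ⁻ᵏ)(u ρᵏ) = z u`, partial fractions write each summand as
`(1 - z u)⁻¹ ((1 - z ρ⁻ᵏ)⁻¹ + (1 - u ρᵏ)⁻¹ - 1)`. Expanding `(1 - z ρᵏ)⁻¹` as a geometric series
of length `n` divided by `1 - zⁿ`, orthogonality of the powers of `ρ` shows that its average over
`k` is `(1 - zⁿ)⁻¹`; the same partial-fraction identity for `zⁿ` and `uⁿ` then recombines the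
averages into the stated product. -/

lemma inv_one_sub_mul_inv_one_sub_mul_one_sub_mul {K : Type*} [Field K] {a b : K}
    (ha : a ≠ 1) (hb : b ≠ 1) :
    (1 - a)⁻¹ * (1 - b)⁻¹ * (1 - a * b) = (1 - a)⁻¹ + (1 - b)⁻¹ - 1 := by
  have ha' : 1 - a ≠ 0 := sub_ne_zero.2 ha.symm
  have hb' : 1 - b ≠ 0 := sub_ne_zero.2 hb.symm
  field_simp
  ring

lemma mul_pow_ne_one_of_pow_ne_one {R : Type*} [CommMonoid R] {ρ z : R} {n : ℕ}
    (hρ : ρ ^ n = 1) (hz : z ^ n ≠ 1) (k : ℕ) : z * ρ ^ k ≠ 1 := by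
  intro h
  apply hz
  rw [← one_pow n, ← h, mul_pow, ← pow_mul, mul_comm k n, pow_mul, hρ, one_pow, mul_one]

namespace IsPrimitiveRoot

variable {K : Type*} [Field K] {ρ : K} {n : ℕ}

lemma geom_sum_pow_eq_zero (hρ : IsPrimitiveRoot ρ n) {m : ℕ} (hm : m ≠ 0) (hmn : m < n) :
    ∑ k ∈ range n, (ρ ^ m) ^ k = 0 := by
  rw [geom_sum_eq (hρ.pow_ne_one_of_pos_of_lt hm hmn), ← pow_mul, mul_comm, pow_mul,
    hρ.pow_eq_one, one_pow, sub_self, zero_div]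

lemma inv_one_sub_mul_pow_eq (hρ : IsPrimitiveRoot ρ n) {z : K} (hz : z ^ n ≠ 1) (k : ℕ) :
    (1 - z * ρ ^ k)⁻¹ = (∑ m ∈ range n, z ^ m * (ρ ^ m) ^ k) / (1 - z ^ n) := by
  have hzk : (1 : K) - z * ρ ^ k ≠ 0 :=
    sub_ne_zero.2 (mul_pow_ne_one_of_pow_ne_one hρ.pow_eq_one hz k).symm
  have hgeom : (1 - z * ρ ^ k) * ∑ m ∈ range n, z ^ m * (ρ ^ m) ^ k = 1 - z ^ n := by
    simp_rw [← pow_mul, mul_comm _ k, pow_mul, ← mul_pow, mul_neg_geom_sum, mul_pow, ← pow_mul,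
      mul_comm k n, pow_mul, hρ.pow_eq_one, one_pow, mul_one]
  rw [eq_div_iff (sub_ne_zero.2 hz.symm), ← hgeom, inv_mul_cancel_left₀ hzk]

lemma sum_inv_one_sub_mul_pow (hρ : IsPrimitiveRoot ρ n) {z : K} (hz : z ^ n ≠ 1) :
    ∑ k ∈ range n, (1 - z * ρ ^ k)⁻¹ = n / (1 - z ^ n) := by
  have hn : 0 < n := Nat.pos_of_ne_zero fun h => hz (h ▸ pow_zero z)
  rw [sum_congr rfl fun k _ => hρ.inv_one_sub_mul_pow_eq hz k, ← sum_div, sum_comm]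
  simp_rw [← mul_sum]
  rw [sum_eq_single_of_mem 0 (mem_range.2 hn)]
  · simp
  · intro m hm hm0
    rw [hρ.geom_sum_pow_eq_zero hm0 (mem_range.1 hm), mul_zero]

lemma average_inv_one_sub_mul_inv_one_sub (hρ : IsPrimitiveRoot ρ n) {z u : K}
    (hzu : z * u ≠ 1) (hz : z ^ n ≠ 1) (hu : u ^ n ≠ 1) :
    (1 / (n : K)) * ∑ k ∈ range n, (1 - z * ρ⁻¹ ^ k)⁻¹ * (1 - u * ρ ^ k)⁻¹ =
      (1 / ((1 - z ^ n) * (1 - u ^ n))) * ((1 - (z * u) ^ n) / (1 - z * u)) := by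
  have hn : n ≠ 0 := fun h => hz (h ▸ pow_zero z)
  have hρ0 : ρ ≠ 0 := hρ.ne_zero hn
  have : NeZero n := ⟨hn⟩
  have hnK : (n : K) ≠ 0 := hρ.neZero'.out
  have hterm (k : ℕ) : (1 - z * ρ⁻¹ ^ k)⁻¹ * (1 - u * ρ ^ k)⁻¹ =
      (1 - z * u)⁻¹ * ((1 - z * ρ⁻¹ ^ k)⁻¹ + (1 - u * ρ ^ k)⁻¹ - 1) := by
    have hprod : z * ρ⁻¹ ^ k * (u * ρ ^ k) = z * u := by rw [inv_pow]; field_simp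
    rw [← inv_one_sub_mul_inv_one_sub_mul_one_sub_mul
      (mul_pow_ne_one_of_pow_ne_one hρ.inv.pow_eq_one hz k)
      (mul_pow_ne_one_of_pow_ne_one hρ.pow_eq_one hu k), hprod]
    field_simp
  have hsum : ∑ k ∈ range n, ((1 - z * ρ⁻¹ ^ k)⁻¹ + (1 - u * ρ ^ k)⁻¹ - 1) =
      n * ((1 - z ^ n)⁻¹ + (1 - u ^ n)⁻¹ - 1) := by
    rw [sum_sub_distrib, sum_add_distrib, hρ.inv.sum_inv_one_sub_mul_pow hz,
      hρ.sum_inv_one_sub_mul_pow hu, sum_const, card_range, nsmul_one]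
    ring
  rw [sum_congr rfl fun k _ => hterm k, ← mul_sum, hsum,
    ← inv_one_sub_mul_inv_one_sub_mul_one_sub_mul hz hu, mul_pow]
  field_simp

end IsPrimitiveRoot

lemma Complex.exp_neg_two_pi_mul_div_mul_I (n k : ℕ) :
    exp (-((2 * k * π / n : ℝ) : ℂ) * I) = (exp (2 * π * I / n))⁻¹ ^ k := by
  rw [← exp_neg, ← exp_nat_mul]
  congr 1
  push_cast
  ring

theorem szego_sum_roots_of_unity_general (n : ℕ) (z w : ℂ)
    (hzw : z * (starRingEnd ℂ) w ≠ 1) (hz1 : z ^ n ≠ 1)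
    (hw1 : (starRingEnd ℂ) w ^ n ≠ 1) :
    (1 / (n : ℂ)) * ∑ k ∈ range n,
        (1 - z * Complex.exp (-(((2 * k * π / n : ℝ)) : ℂ) * Complex.I))⁻¹ *
          (starRingEnd ℂ)
            ((1 - w * Complex.exp (-(((2 * k * π / n : ℝ)) : ℂ) * Complex.I))⁻¹) =
      (1 / ((1 - z ^ n) * (1 - (starRingEnd ℂ) w ^ n))) *
        ((1 - (z * (starRingEnd ℂ) w) ^ n) / (1 - z * (starRingEnd ℂ) w)) := by
  have hn : n ≠ 0 := fun h => hz1 (h ▸ pow_zero z)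
  have hζ := Complex.isPrimitiveRoot_exp n hn
  have hconj (k : ℕ) :
      (starRingEnd ℂ) ((exp (2 * π * I / n))⁻¹ ^ k) = exp (2 * π * I / n) ^ k := by
    rw [map_pow, map_inv₀, ← RCLike.inv_eq_conj (hζ.norm'_eq_one hn), inv_inv]
  simp only [exp_neg_two_pi_mul_div_mul_I, map_inv₀, map_sub, map_one, map_mul, hconj]
  exact hζ.average_inv_one_sub_mul_inv_one_sub hzw hz1 hw1

theorem szego_sum_roots_of_unity (n : ℕ) (hn : 1 ≤ n) (z w : ℂ)
    (hz : ‖z‖ < 1) (hw : ‖w‖ < 1)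
    (hzw : z * (starRingEnd ℂ) w ≠ 1) (hz1 : z ^ n ≠ 1)
    (hw1 : (starRingEnd ℂ) w ^ n ≠ 1) :
    (1 / (n : ℂ)) * ∑ k ∈ range n,
        (1 - z * Complex.exp (-(((2 * k * π / n : ℝ)) : ℂ) * Complex.I))⁻¹ *
          (starRingEnd ℂ)
            ((1 - w * Complex.exp (-(((2 * k * π / n : ℝ)) : ℂ) * Complex.I))⁻¹) =
      (1 / ((1 - z ^ n) * (1 - (starRingEnd ℂ) w ^ n))) *
        ((1 - (z * (starRingEnd ℂ) w) ^ n) / (1 - z * (starRingEnd ℂ) w)) :=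
  szego_sum_roots_of_unity_general n z w hzw hz1 hw1
end

section
/- The limit as r → 1⁻ of [ r^2/(1-r^2) - (N+1) r^{2(N+1)}/(1-r^{2(N+1)}) ] equals N/2; hence the expected number of zeros of the degree-N hyperbolic GAF polynomial inside the unit disk is N/2. -/
open Finset Filter

theorem expected_number_of_zeros_limit (N : ℕ) (hN : 1 ≤ N) :
    Filter.Tendsto
      (fun r : ℝ => r ^ 2 / (1 - r ^ 2) -
        (N + 1) * r ^ (2 * (N + 1)) / (1 - r ^ (2 * (N + 1))))
      (nhdsWithin 1 (Set.Iio 1)) (nhds ((N : ℝ) / 2)) := by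
  classical
  set S : ℝ → ℝ := fun x => ∑ k ∈ range (N + 1), x ^ k with hSdef
  set Q : ℝ → ℝ := fun x => ∑ k ∈ range N, x ^ (k + 1) * ∑ j ∈ range (N - k), x ^ j with hQdef
  -- Gauss-type sum
  have hnat : ∀ n : ℕ, 2 * ∑ k ∈ range n, (n - k) = n * (n + 1) := by
    intro n
    induction n with
    | zero => simp
    | succ m ih =>
      rw [Finset.sum_range_succ']
      simp only [Nat.succ_sub_succ, Nat.sub_zero]
      rw [mul_add, ih]
      ring
  have hS1 : S 1 = (N : ℝ) + 1 := by simp [hSdef]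
  have hQ1 : 2 * Q 1 = (N : ℝ) * ((N : ℝ) + 1) := by
    have h1 : Q 1 = ((∑ k ∈ range N, (N - k) : ℕ) : ℝ) := by
      simp [hQdef]
    have h2 := congrArg (fun n : ℕ => (n : ℝ)) (hnat N)
    push_cast at h2
    rw [h1]
    push_cast
    linarith
  have hval : Q 1 / S 1 = (N : ℝ) / 2 := by
    rw [hS1, div_eq_div_iff (by positivity) (by norm_num)]
    linarith
  have hQc : Continuous Q := by
    rw [hQdef]
    exact continuous_finset_sum _ fun k _ =>
      (continuous_pow _).mul (continuous_finset_sum _ fun j _ => continuous_pow _)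
  have hSc : Continuous S := by
    rw [hSdef]
    exact continuous_finset_sum _ fun k _ => continuous_pow _
  have htend : Tendsto (fun r : ℝ => Q (r ^ 2) / S (r ^ 2))
      (nhdsWithin 1 (Set.Iio 1)) (nhds ((N : ℝ) / 2)) := by
    have hc : ContinuousAt (fun r : ℝ => Q (r ^ 2) / S (r ^ 2)) 1 := by
      apply ContinuousAt.div
      · exact (hQc.comp (continuous_pow 2)).continuousAt
      · exact (hSc.comp (continuous_pow 2)).continuousAt
      · show S (1 ^ 2) ≠ 0
        rw [one_pow, hS1]
        positivity
    have := hc.tendsto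
    simp only [one_pow, hval] at this
    exact this.mono_left nhdsWithin_le_nhds
  -- key algebraic identity for x ∈ (0,1)
  have key : ∀ x : ℝ, 0 < x → x < 1 →
      Q x / S x = x / (1 - x) - ((N : ℝ) + 1) * x ^ (N + 1) / (1 - x ^ (N + 1)) := by
    intro x hx0 hx1
    have h1x : (1 : ℝ) - x ≠ 0 := by linarith
    have hs : S x ≠ 0 := by
      have : 0 < S x := by
        rw [hSdef]
        exact Finset.sum_pos (fun k _ => pow_pos hx0 k) (by simp)
      linarith
    have hxN : (1 : ℝ) - x ^ (N + 1) ≠ 0 := by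
      have : x ^ (N + 1) < 1 := pow_lt_one₀ hx0.le hx1 (Nat.succ_ne_zero N)
      linarith
    have h1 : (1 - x) * S x = 1 - x ^ (N + 1) := by
      have := geom_sum_mul x (N + 1)
      rw [hSdef]
      simp only
      linarith [this]
    have h2 : (1 - x) * Q x = x * S x - ((N : ℝ) + 1) * x ^ (N + 1) := by
      have e1 : (1 - x) * Q x = ∑ k ∈ range N, (x ^ (k + 1) - x ^ (N + 1)) := by
        rw [hQdef]
        simp only
        rw [Finset.mul_sum]
        refine Finset.sum_congr rfl fun k hk => ?_
        have hk' : k < N := Finset.mem_range.mp hk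
        have hpow : x ^ (N + 1) = x ^ (k + 1) * x ^ (N - k) := by
          rw [← pow_add]; congr 1; omega
        rw [hpow]
        linear_combination (-(x ^ (k + 1))) * geom_sum_mul x (N - k)
      have e2 : x * S x = (∑ k ∈ range N, x ^ (k + 1)) + x ^ (N + 1) := by
        rw [hSdef]
        simp only
        rw [Finset.mul_sum, Finset.sum_range_succ]
        congr 1
        · exact Finset.sum_congr rfl fun k _ => by ring
        · ring
      rw [e1, e2, Finset.sum_sub_distrib, Finset.sum_const, Finset.card_range]
      ring
    rw [← mul_div_mul_left (Q x) (S x) h1x, h2, h1, sub_div]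
    congr 1
    rw [← h1]
    field_simp
  refine htend.congr' ?_
  have hIoi : Set.Ioi (0 : ℝ) ∈ nhdsWithin 1 (Set.Iio 1) :=
    Filter.le_def.mp nhdsWithin_le_nhds _ (Ioi_mem_nhds one_pos)
  filter_upwards [self_mem_nhdsWithin, hIoi] with r hr1 hr0
  have hr1' : r < 1 := hr1
  have hr0' : (0 : ℝ) < r := hr0
  have hx0 : (0 : ℝ) < r ^ 2 := by positivity
  have hx1 : r ^ 2 < 1 := by nlinarith
  show Q (r ^ 2) / S (r ^ 2) =
    r ^ 2 / (1 - r ^ 2) - ((N : ℝ) + 1) * r ^ (2 * (N + 1)) / (1 - r ^ (2 * (N + 1)))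
  rw [pow_mul]
  exact key (r ^ 2) hx0 hx1
end

section
/- Borchardt's identity: det(1/(1-a_p b_q))_{p,q=1}^n · per(1/(1-a_p b_q))_{p,q=1}^n = det(1/(1-a_p b_q)^2)_{p,q=1}^n. -/
/-!
Write `δ M = det M * per M - det (M ⊙ M)`. Multiplying row `p` of `(1 - a_p b_q)⁻¹` by
`∏_r (1 - a_p b_r)` scales `δ` by a nonzero square and yields the polynomial matrix
`Ĉ_pq = ∏_{r ≠ q} (1 - a_p b_r)`; so it suffices to prove the polynomial identity `δ Ĉ = 0`, and
hence to prove it for the indeterminates of `ℤ[a, b]` inside its fraction field, where the `a_p`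
are distinct, the `b_q` distinct and nonzero, and `a_p b_q ≠ 1`. For such generic values argue
by induction on `n`: as a polynomial in the first-row variable `x = a_0`, `δ Ĉ` has degree at
most `2n` and vanishes at the `2n + 1` points `a_1, …, a_{n}` (two equal rows) and `b_q⁻¹` (the
first row is then concentrated in column `q`, and expanding along it leaves, up to a diagonal
factor, `Ĉ` for one variable fewer on each side).
-/

open Finset

/-- The permanent of a square matrix. -/
noncomputable def permanent {n : ℕ} (M : Matrix (Fin n) (Fin n) ℂ) : ℂ :=
  ∑ σ : Equiv.Perm (Fin n), ∏ j, M j (σ j)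

theorem Fin.prod_univ_erase_succAbove {M : Type*} [CommMonoid M] {n : ℕ} (f : Fin (n + 1) → M)
    (q : Fin (n + 1)) (j : Fin n) :
    ∏ r ∈ univ.erase (q.succAbove j), f r = f q * ∏ r ∈ univ.erase j, f (q.succAbove r) := by
  have erase_eq : ∀ {m : ℕ} (g : Fin m → M) (k : Fin m),
      ∏ r ∈ univ.erase k, g r = ∏ r, Function.update g k 1 r := fun g k => by
    rw [prod_update_of_mem (mem_univ k), one_mul, sdiff_singleton_eq_erase]
  rw [erase_eq, erase_eq, Fin.prod_univ_succAbove _ q,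
    Function.update_of_ne (Fin.succAbove_ne q j).symm]
  exact congrArg (f q * ·) <| prod_congr rfl fun r _ =>
    congrFun (Function.update_comp_eq_of_injective f Fin.succAbove_right_injective j 1) r

namespace Matrix

open Equiv Polynomial

variable {ι : Type*} [Fintype ι]

theorem natDegree_prod_perm_le {R : Type*} [CommRing R] (A : Matrix ι ι R[X]) (d : ι → ℕ)
    (h : ∀ i j, (A i j).natDegree ≤ d i) (σ : Perm ι) :
    (∏ i, A (σ i) i).natDegree ≤ ∑ i, d i :=
  (natDegree_prod_le _ _).trans <| (sum_le_sum fun _ _ => h _ _).trans_eq (Equiv.sum_comp σ d)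

variable [DecidableEq ι]

section Permanent

variable {R : Type*} [CommSemiring R]

theorem permanent_map {S : Type*} [CommSemiring S] (f : R →+* S) (M : Matrix ι ι R) :
    (M.map f).permanent = f M.permanent := by
  simp [permanent, map_sum, map_prod]

theorem permanent_diagonal_mul (d : ι → R) (M : Matrix ι ι R) :
    (diagonal d * M).permanent = (∏ i, d i) * M.permanent := by
  simp only [permanent, diagonal_mul, prod_mul_distrib, mul_sum]
  exact sum_congr rfl fun σ _ => by rw [Equiv.prod_comp σ d]

theorem permanent_succ_column_zero {n : ℕ} (A : Matrix (Fin (n + 1)) (Fin (n + 1)) R) :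
    A.permanent = ∑ i, A i 0 * (A.submatrix i.succAbove Fin.succ).permanent := by
  rw [permanent, univ_perm_fin_succ, ← univ_product_univ, sum_map, sum_product]
  refine sum_congr rfl fun i _ => ?_
  induction i using Fin.cases with
  | zero => simp [permanent, Fin.prod_univ_succ, mul_sum]
  | succ i =>
    rw [← permanent_permute_cols i.cycleRange, permanent, mul_sum]
    refine sum_congr rfl fun σ _ => ?_
    simp [Fin.prod_univ_succ, Fin.succAbove_cycleRange]

theorem permanent_succ_row_zero {n : ℕ} (A : Matrix (Fin (n + 1)) (Fin (n + 1)) R) :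
    A.permanent = ∑ j, A 0 j * (A.submatrix Fin.succ j.succAbove).permanent := by
  rw [← permanent_transpose, permanent_succ_column_zero]
  simp [← transpose_submatrix]

end Permanent

section Degree

variable {R : Type*} [CommRing R] (A : Matrix ι ι R[X]) (d : ι → ℕ)

theorem natDegree_permanent_le (h : ∀ i j, (A i j).natDegree ≤ d i) :
    A.permanent.natDegree ≤ ∑ i, d i :=
  natDegree_sum_le_of_forall_le _ _ fun σ _ => natDegree_prod_perm_le A d h σ

theorem natDegree_det_le (h : ∀ i j, (A i j).natDegree ≤ d i) :
    A.det.natDegree ≤ ∑ i, d i := by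
  rw [det_apply']
  refine natDegree_sum_le_of_forall_le _ _ fun σ _ => natDegree_mul_le.trans ?_
  simpa using natDegree_prod_perm_le A d h σ

end Degree

section Defect

variable {R : Type*} [CommRing R]

noncomputable def borchardtDefect (M : Matrix ι ι R) : R :=
  M.det * M.permanent - (M ⊙ M).det

theorem borchardtDefect_map {S : Type*} [CommRing S] (f : R →+* S) (M : Matrix ι ι R) :
    borchardtDefect (M.map f) = f (borchardtDefect M) := by
  have : M.map f ⊙ M.map f = (M ⊙ M).map f := by ext; simp
  simp [borchardtDefect, permanent_map, RingHom.map_det, this]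

theorem borchardtDefect_diagonal_mul (d : ι → R) (M : Matrix ι ι R) :
    borchardtDefect (diagonal d * M) = (∏ i, d i) ^ 2 * borchardtDefect M := by
  have : (diagonal d * M) ⊙ (diagonal d * M) = diagonal (d ^ 2) * (M ⊙ M) := by
    ext i j
    simp only [hadamard_apply, diagonal_mul, Pi.pow_apply]
    ring
  rw [borchardtDefect, borchardtDefect, this, det_mul, det_mul, det_diagonal, det_diagonal,
    permanent_diagonal_mul]
  simp only [Pi.pow_apply, prod_pow]
  ring

theorem borchardtDefect_eq_zero_of_row_eq {M : Matrix ι ι R} {i j : ι} (hij : i ≠ j)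
    (h : M i = M j) : borchardtDefect M = 0 := by
  have h2 : (M ⊙ M) i = (M ⊙ M) j := funext fun k => by simp [hadamard_apply, h]
  rw [borchardtDefect, det_zero_of_row_eq hij h, det_zero_of_row_eq hij h2, zero_mul, sub_zero]

theorem borchardtDefect_of_row_zero_eq_single {n : ℕ} {M : Matrix (Fin (n + 1)) (Fin (n + 1)) R}
    {q : Fin (n + 1)} (h : ∀ j ≠ q, M 0 j = 0) :
    borchardtDefect M =
      (-1) ^ (q : ℕ) * M 0 q ^ 2 * borchardtDefect (M.submatrix Fin.succ q.succAbove) := by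
  have single : ∀ {f : Fin (n + 1) → R}, (∀ j ≠ q, f j = 0) → ∑ j, f j = f q := fun hf =>
    sum_eq_single q (fun j _ hj => hf j hj) (by simp)
  rw [borchardtDefect, borchardtDefect, det_succ_row_zero, det_succ_row_zero (M ⊙ M),
    permanent_succ_row_zero, single, single, single, submatrix_hadamard]
  · simp only [hadamard_apply]
    ring
  all_goals intro j hj; simp [hadamard_apply, h j hj]

theorem natDegree_borchardtDefect_le (A : Matrix ι ι R[X]) (d : ι → ℕ)
    (h : ∀ i j, (A i j).natDegree ≤ d i) : (borchardtDefect A).natDegree ≤ 2 * ∑ i, d i := by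
  have h2 : ∀ i j, ((A ⊙ A) i j).natDegree ≤ 2 * d i := fun i j =>
    natDegree_mul_le.trans (by rw [two_mul]; exact add_le_add (h i j) (h i j))
  refine (natDegree_sub_le _ _).trans (max_le ?_ ?_)
  · exact natDegree_mul_le.trans (by
      rw [two_mul]; exact add_le_add (natDegree_det_le A d h) (natDegree_permanent_le A d h))
  · simpa [mul_sum] using natDegree_det_le (A ⊙ A) (2 * d) h2

end Defect

/-- The matrix `(1 - a p * b q)⁻¹` with row `p` multiplied by `∏ r, (1 - a p * b r)`. -/
def clearedCauchyMatrix {R : Type*} [CommRing R] (a b : ι → R) : Matrix ι ι R :=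
  of fun p q => ∏ r ∈ univ.erase q, (1 - a p * b r)

theorem clearedCauchyMatrix_map {R S : Type*} [CommRing R] [CommRing S] (f : R →+* S)
    (a b : ι → R) : (clearedCauchyMatrix a b).map f = clearedCauchyMatrix (f ∘ a) (f ∘ b) := by
  ext; simp [clearedCauchyMatrix, map_prod]

theorem clearedCauchyMatrix_eq_diagonal_mul {K : Type*} [Field K] {a b : ι → K}
    (h : ∀ p q, a p * b q ≠ 1) :
    clearedCauchyMatrix a b =
      diagonal (fun p => ∏ r, (1 - a p * b r)) * of fun p q => (1 - a p * b q)⁻¹ := by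
  ext p q
  rw [diagonal_mul, ← mul_prod_erase univ _ (mem_univ q), of_apply,
    mul_right_comm, mul_inv_cancel₀ (sub_ne_zero.2 (h p q).symm), one_mul]
  rfl

theorem natDegree_clearedCauchyMatrix_le {R : Type*} [CommRing R] (a : ι → R[X]) (b : ι → R)
    (p q : ι) :
    (clearedCauchyMatrix a (C ∘ b) p q).natDegree ≤ (Fintype.card ι - 1) * (a p).natDegree := by
  have factor_le : ∀ r, (1 - a p * C (b r)).natDegree ≤ (a p).natDegree := fun r =>
    (natDegree_sub_le _ _).trans (by simpa using natDegree_mul_C_le (a p) (b r))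
  refine (natDegree_prod_le _ _).trans ((sum_le_sum fun r _ => factor_le r).trans_eq ?_)
  simp [card_erase_of_mem]

theorem clearedCauchyMatrix_apply_eq_zero {R : Type*} [CommRing R] {a b : ι → R} {p q j : ι}
    (h : a p * b q = 1) (hj : j ≠ q) : clearedCauchyMatrix a b p j = 0 :=
  prod_eq_zero (mem_erase.2 ⟨hj.symm, mem_univ q⟩) (sub_eq_zero.2 h.symm)

theorem clearedCauchyMatrix_submatrix_succ_succAbove {R : Type*} [CommRing R] {n : ℕ}
    (a b : Fin (n + 1) → R) (q : Fin (n + 1)) :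
    (clearedCauchyMatrix a b).submatrix Fin.succ q.succAbove =
      diagonal (fun p => 1 - a p.succ * b q) *
        clearedCauchyMatrix (Fin.tail a) (b ∘ q.succAbove) := by
  ext p j
  simp [clearedCauchyMatrix, diagonal_mul, Fin.prod_univ_erase_succAbove, Fin.tail]

theorem borchardtDefect_clearedCauchyMatrix_eq_zero_of_injective {K : Type*} [Field K] :
    ∀ {n : ℕ} {a b : Fin n → K}, Function.Injective a → Function.Injective b → (∀ q, b q ≠ 0) →
      (∀ p q, a p * b q ≠ 1) → borchardtDefect (clearedCauchyMatrix a b) = 0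
  | 0, _, _, _, _, _, _ => by simp [borchardtDefect, permanent_isEmpty]
  | n + 1, a, b, ha, hb, hb0, hab => by
    obtain ⟨x, a, rfl⟩ : ∃ x a', Fin.cons x a' = a := ⟨_, _, Fin.cons_self_tail a⟩
    set F : K[X] := borchardtDefect (clearedCauchyMatrix (Fin.cons X (C ∘ a)) (C ∘ b))
    have eval_F : ∀ y, F.eval y = borchardtDefect (clearedCauchyMatrix (Fin.cons y a) b) := by
      intro y
      rw [← coe_evalRingHom, ← borchardtDefect_map, clearedCauchyMatrix_map, Fin.comp_cons]
      simp only [coe_evalRingHom, eval_X, Function.comp_def, eval_C]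
    have root_a : ∀ p, F.eval (a p) = 0 := fun p => by
      rw [eval_F]
      exact borchardtDefect_eq_zero_of_row_eq (Fin.succ_ne_zero p).symm
        (funext fun q => by simp [clearedCauchyMatrix])
    have root_b : ∀ q, F.eval (b q)⁻¹ = 0 := fun q => by
      have ih : borchardtDefect (clearedCauchyMatrix a (b ∘ q.succAbove)) = 0 :=
        borchardtDefect_clearedCauchyMatrix_eq_zero_of_injective
          ((Fin.cons_injective_iff.1 ha).2) (hb.comp Fin.succAbove_right_injective)
          (fun r => hb0 _) (fun p r => by simpa using hab p.succ (q.succAbove r))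
      rw [eval_F, borchardtDefect_of_row_zero_eq_single (q := q)
        (fun j hj => clearedCauchyMatrix_apply_eq_zero (by simp [hb0 q]) hj),
        clearedCauchyMatrix_submatrix_succ_succAbove, borchardtDefect_diagonal_mul, Fin.tail_cons,
        ih, mul_zero, mul_zero]
    have roots_injective : Function.Injective (Sum.elim a fun q => (b q)⁻¹) := by
      refine ((Fin.cons_injective_iff.1 ha).2).sumElim (inv_injective.comp hb) fun p q h => ?_
      exact hab p.succ q (by simp [h, hb0 q])
    have deg_F : F.natDegree ≤ 2 * n := by
      refine (natDegree_borchardtDefect_le _ _ (natDegree_clearedCauchyMatrix_le _ b)).trans_eq ?_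
      simp [Fin.sum_univ_succ]
    have hF : F = 0 := eq_zero_of_natDegree_lt_card_of_eval_eq_zero F roots_injective
      (Sum.forall.2 ⟨root_a, root_b⟩) (by simp; omega)
    simpa [hF] using (eval_F x).symm

open MvPolynomial in
theorem borchardtDefect_clearedCauchyMatrix_eq_zero {R : Type*} [CommRing R] {n : ℕ}
    (a b : Fin n → R) : borchardtDefect (clearedCauchyMatrix a b) = 0 := by
  let A := MvPolynomial (Fin n ⊕ Fin n) ℤ
  let K := FractionRing A
  have inj : Function.Injective (algebraMap A K) := IsFractionRing.injective A K
  let x : Fin n → A := fun p => X (Sum.inl p)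
  let y : Fin n → A := fun q => X (Sum.inr q)
  have generic :
      borchardtDefect (clearedCauchyMatrix (algebraMap A K ∘ x) (algebraMap A K ∘ y)) = 0 := by
    refine borchardtDefect_clearedCauchyMatrix_eq_zero_of_injective
      (inj.comp (X_injective.comp Sum.inl_injective))
      (inj.comp (X_injective.comp Sum.inr_injective))
      (fun q => (map_ne_zero_iff _ inj).2 (X_ne_zero _)) fun p q hpq => ?_
    have : x p * y q = 1 := inj (by simpa using hpq)
    simpa [x, y] using congrArg MvPolynomial.constantCoeff this
  have universal : borchardtDefect (clearedCauchyMatrix x y) = 0 := by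
    rw [← clearedCauchyMatrix_map, borchardtDefect_map] at generic
    exact (map_eq_zero_iff _ inj).1 generic
  have := congrArg (eval₂Hom (Int.castRingHom R) (Sum.elim a b)) universal
  rw [← borchardtDefect_map, clearedCauchyMatrix_map, map_zero] at this
  simpa [x, y, Function.comp_def] using this

theorem borchardtDefect_inv_one_sub_mul_eq_zero {K : Type*} [Field K] {n : ℕ} {a b : Fin n → K}
    (h : ∀ p q, a p * b q ≠ 1) : borchardtDefect (of fun p q => (1 - a p * b q)⁻¹) = 0 := by
  have hne : ∀ p q, 1 - a p * b q ≠ 0 := fun p q => sub_ne_zero.2 (h p q).symm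
  have := borchardtDefect_clearedCauchyMatrix_eq_zero a b
  rw [clearedCauchyMatrix_eq_diagonal_mul h, borchardtDefect_diagonal_mul] at this
  refine (mul_eq_zero.1 this).resolve_left (pow_ne_zero 2 ?_)
  exact prod_ne_zero_iff.2 fun p _ => prod_ne_zero_iff.2 fun r _ => hne p r

end Matrix

theorem permanent_eq_matrix_permanent {n : ℕ} (M : Matrix (Fin n) (Fin n) ℂ) :
    permanent M = M.permanent :=
  M.permanent_transpose

theorem borchardt_identity (n : ℕ) (a b : Fin n → ℂ)
    (h : ∀ p q, a p * b q ≠ 1) :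
    Matrix.det (Matrix.of fun p q : Fin n => (1 - a p * b q)⁻¹) *
      permanent (Matrix.of fun p q : Fin n => (1 - a p * b q)⁻¹) =
    Matrix.det (Matrix.of fun p q : Fin n => ((1 - a p * b q) ^ 2)⁻¹) := by
  set M := Matrix.of fun p q : Fin n => (1 - a p * b q)⁻¹
  have hadamard_self : (Matrix.of fun p q : Fin n => ((1 - a p * b q) ^ 2)⁻¹) = M.hadamard M := by
    ext p q
    simp [M, sq]
  rw [permanent_eq_matrix_permanent, hadamard_self, ← sub_eq_zero]
  exact Matrix.borchardtDefect_inv_one_sub_mul_eq_zero h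
end

section
/- Multi-dimensional Cauchy-type reproducing formula: for pairwise distinct a_1,...,a_n inside the unit circle C and a symmetric entire (or analytic on a neighborhood of the closed unit polydisk) function Q, (1/(2πi))^n ∮_{C^n} V(z)^2 · ∏_{k,j} (z_k - a_j)^{-1} · Q(z) dz_1⋯dz_n = (-1)^{binom(n,2)} · n! · Q(a). -/
open Complex Real Finset MeasureTheory

/-!
Partial fractions write the kernel `∏ⱼ (z_k - a_j)⁻¹` of each variable as `∑ⱼ w_j (z_k - a_j)⁻¹`
with the barycentric weights `w_j = ∏_{i ≠ j} (a_j - a_i)⁻¹` (`nodalWeight univ a j`). The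
integral thus becomes a sum over all maps `g : Fin n → Fin n` of iterated one-variable Cauchy
integrals, the `g`-th one being `(2πi)ⁿ (∏_k w_{g k}) V(a ∘ g)² Q(a ∘ g)`. The Vandermonde
factor kills every non-injective `g`; for a permutation `σ` the summand is `(∏ⱼ w_j) V(a)² Q(a)`
since `V²` and `Q` are symmetric, and
`∏ⱼ w_j · V(a)² = (-1)^(n choose 2)` because `∏ⱼ ∏_{i ≠ j} (a_j - a_i) = (-1)^(n choose 2) V(a)²`.
-/

open Metric Matrix Lagrange Function

theorem Lagrange.prod_inv_sub_eq_sum_nodalWeight_mul_inv_sub {K ι : Type*} [Field K]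
    [DecidableEq ι] {s : Finset ι} {v : ι → K} {x : K} (hvs : Set.InjOn v s) (hs : s.Nonempty)
    (hx : ∀ i ∈ s, x ≠ v i) :
    ∏ i ∈ s, (x - v i)⁻¹ = ∑ i ∈ s, nodalWeight s v i * (x - v i)⁻¹ := by
  have h := eval_interpolate_not_at_node 1 hx
  simp only [interpolate_one hvs hs, Polynomial.eval_one, eval_nodal, Pi.one_apply, mul_one] at h
  rw [prod_inv_distrib, inv_eq_of_mul_eq_one_right h.symm]

theorem Fin.sum_card_Ioi (n : ℕ) : ∑ j : Fin n, #(Ioi j) = n.choose 2 := by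
  simp only [Fin.card_Ioi]
  rw [Fin.sum_univ_eq_sum_range (fun j => n - 1 - j), sum_range_reflect (fun j => j) n,
    sum_range_id, Nat.choose_two_right]

section Vandermonde

variable {n : ℕ}

theorem Matrix.prod_prod_erase_sub_eq_det_vandermonde_sq {R : Type*} [CommRing R]
    (v : Fin n → R) :
    ∏ j, ∏ i ∈ univ.erase j, (v j - v i) = (-1) ^ n.choose 2 * (vandermonde v).det ^ 2 := by
  have hsplit (j : Fin n) : univ.erase j = (Ioi j).disjUnion (Iio j)
      (disjoint_left.2 fun _ hi hi' => (mem_Ioi.1 hi).asymm (mem_Iio.1 hi')) := by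
    ext i
    simp only [mem_erase, mem_univ, and_true, mem_disjUnion, mem_Ioi, mem_Iio]
    exact ne_comm.trans ne_iff_lt_or_gt
  have hupper : ∏ j, ∏ i ∈ Ioi j, (v j - v i) = (-1) ^ n.choose 2 * (vandermonde v).det := by
    calc ∏ j, ∏ i ∈ Ioi j, (v j - v i) = ∏ j, ∏ i ∈ Ioi j, -(v i - v j) := by simp only [neg_sub]
      _ = _ := by
        simp only [prod_neg, prod_mul_distrib, prod_pow_eq_pow_sum, Fin.sum_card_Ioi,
          det_vandermonde]
  have hlower : ∏ j, ∏ i ∈ Iio j, (v j - v i) = (vandermonde v).det := by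
    rw [det_vandermonde]
    exact prod_comm' (by simp)
  simp_rw [hsplit, prod_disjUnion, prod_mul_distrib, hupper, hlower]
  ring

theorem Matrix.prod_nodalWeight_mul_det_vandermonde_sq {K : Type*} [Field K] {v : Fin n → K}
    (hv : Injective v) :
    (∏ j, nodalWeight univ v j) * (vandermonde v).det ^ 2 = (-1) ^ n.choose 2 := by
  have hdet : (vandermonde v).det ^ 2 ≠ 0 := pow_ne_zero 2 (det_vandermonde_ne_zero_iff.2 hv)
  simp only [nodalWeight, prod_inv_distrib, prod_prod_erase_sub_eq_det_vandermonde_sq]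
  rw [mul_inv, mul_assoc, inv_mul_cancel₀ hdet, mul_one, ← inv_pow, inv_neg, inv_one]

theorem Matrix.det_vandermonde_comp_perm_sq {R : Type*} [CommRing R] (v : Fin n → R)
    (σ : Equiv.Perm (Fin n)) : (vandermonde (v ∘ σ)).det ^ 2 = (vandermonde v).det ^ 2 := by
  have : vandermonde (v ∘ σ) = (vandermonde v).submatrix σ id := rfl
  rw [this, det_permute, mul_pow, ← Int.cast_pow, ← Units.val_pow_eq_pow_val, Int.units_sq,
    Units.val_one, Int.cast_one, one_mul]

theorem Matrix.differentiable_det_vandermonde {𝕜 : Type*} [NontriviallyNormedField 𝕜] :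
    Differentiable 𝕜 fun z : Fin n → 𝕜 => (vandermonde z).det := by
  simp_rw [det_vandermonde]
  fun_prop

end Vandermonde

theorem Fintype.sum_eq_sum_perm_of_not_injective {α M : Type*} [Fintype α] [DecidableEq α]
    [AddCommMonoid M] {f : (α → α) → M} (hf : ∀ g, ¬ Injective g → f g = 0) :
    ∑ g, f g = ∑ σ : Equiv.Perm α, f σ := by
  let e : Equiv.Perm α ↪ (α → α) := ⟨(⇑), DFunLike.coe_injective⟩
  calc ∑ g, f g = ∑ g ∈ univ.map e, f g := by
        refine (Finset.sum_subset (subset_univ _) fun g _ hg => hf g fun hinj => hg ?_).symm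
        exact mem_map.2
          ⟨Equiv.ofBijective g (Finite.injective_iff_bijective.1 hinj), mem_univ _, rfl⟩
    _ = ∑ σ : Equiv.Perm α, f σ := Finset.sum_map _ _ _

theorem sum_prod_nodalWeight_mul_det_vandermonde_sq_mul {K : Type*} [Field K] {n : ℕ}
    {a : Fin n → K} (ha : Injective a) {Q : (Fin n → K) → K}
    (hQ : ∀ (σ : Equiv.Perm (Fin n)) z, Q (z ∘ σ) = Q z) :
    ∑ g : Fin n → Fin n,
        (∏ k, nodalWeight univ a (g k)) * ((vandermonde (a ∘ g)).det ^ 2 * Q (a ∘ g)) =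
      (-1) ^ n.choose 2 * n.factorial * Q a := by
  have hperm (σ : Equiv.Perm (Fin n)) :
      (∏ k, nodalWeight univ a (σ k)) * ((vandermonde (a ∘ σ)).det ^ 2 * Q (a ∘ σ)) =
        (-1) ^ n.choose 2 * Q a := by
    rw [Equiv.prod_comp σ (nodalWeight univ a), det_vandermonde_comp_perm_sq, hQ, ← mul_assoc,
      prod_nodalWeight_mul_det_vandermonde_sq ha]
  rw [Fintype.sum_eq_sum_perm_of_not_injective fun g hg => ?_]
  · simp only [hperm, sum_const, card_univ, Fintype.card_perm, Fintype.card_fin, nsmul_eq_mul]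
    ring
  · obtain ⟨i, j, hij, hne⟩ := Function.not_injective_iff.1 hg
    rw [det_vandermonde_eq_zero_iff.2 ⟨i, j, by simp only [Function.comp_apply, hij], hne⟩]
    ring

section TorusIntegral

variable {E : Type*} [NormedAddCommGroup E] [NormedSpace ℂ E] {n : ℕ}

theorem torusIntegral_finset_sum {ι : Type*} (s : Finset ι) {f : ι → (Fin n → ℂ) → E}
    {c : Fin n → ℂ} {R : Fin n → ℝ} (hf : ∀ i ∈ s, TorusIntegrable (f i) c R) :
    (∯ z in T(c, R), ∑ i ∈ s, f i z) = ∑ i ∈ s, ∯ z in T(c, R), f i z := by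
  simp only [torusIntegral, smul_sum]
  exact integral_finsetSum s fun i hi => (hf i hi).function_integrable

theorem setIntegral_pi_Ioc_eq_torusIntegral (f : (Fin n → ℂ) → E) :
    ∫ θ in Set.univ.pi fun _ : Fin n => Set.Ioc 0 (2 * π),
        (∏ k, I * exp ((θ k : ℂ) * I)) • f (fun k => exp ((θ k : ℂ) * I)) =
      ∯ z in T(0, fun _ => 1), f z := by
  rw [volume_pi, setIntegral_congr_set Measure.univ_pi_Ioc_ae_eq_Icc, torusIntegral, ← volume_pi]
  refine setIntegral_congr_fun measurableSet_Icc fun θ _ => ?_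
  congr 1
  · simp only [ofReal_one, one_mul, mul_comm I]
  · congr 1
    ext k
    simp [torusMap]

theorem torusIntegrable_prod_inv_sub_smul {c b : Fin n → ℂ} {R : Fin n → ℝ}
    (hb : ∀ k, b k ∈ ball (c k) (R k)) {F : (Fin n → ℂ) → E} (hF : Continuous F) :
    TorusIntegrable (fun z => (∏ k, (z k - b k)⁻¹) • F z) c R := by
  have hmap : Continuous (torusMap c R) := continuous_pi fun k =>
    (continuous_circleMap _ _).comp (continuous_apply k)
  have hkernel : Continuous fun θ => ∏ k, (torusMap c R θ k - b k)⁻¹ :=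
    continuous_finsetProd _ fun k _ => (continuous_circleMap_inv (hb k)).comp (continuous_apply k)
  exact (hkernel.smul (hF.comp hmap)).continuousOn.integrableOn_compact isCompact_Icc

theorem torusIntegral_prod_inv_sub_smul [CompleteSpace E] {c b : Fin n → ℂ} {R : Fin n → ℝ}
    (hb : ∀ k, b k ∈ ball (c k) (R k)) {F : (Fin n → ℂ) → E} (hF : Differentiable ℂ F) :
    (∯ z in T(c, R), (∏ k, (z k - b k)⁻¹) • F z) = (2 * π * I : ℂ) ^ n • F b := by
  induction n with
  | zero => simp [Subsingleton.elim c b]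
  | succ n ih =>
    have hslice (x : ℂ) : Differentiable ℂ fun y : Fin n → ℂ => F (Fin.cons x y) :=
      hF.comp ((differentiable_const x).finCons differentiable_id)
    have hinner (x : ℂ) :
        (∯ y in T(c ∘ Fin.succ, R ∘ Fin.succ),
            (∏ k, ((Fin.cons x y : Fin (n + 1) → ℂ) k - b k)⁻¹) • F (Fin.cons x y)) =
          (x - b 0)⁻¹ • (2 * π * I : ℂ) ^ n • F (Fin.cons x (Fin.tail b)) := by
      simp only [Fin.prod_univ_succ, Fin.cons_zero, Fin.cons_succ, mul_smul]
      rw [torusIntegral_smul]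
      exact congrArg _ (ih (b := Fin.tail b) (fun k => hb k.succ) (hslice x))
    rw [torusIntegral_succ (torusIntegrable_prod_inv_sub_smul hb hF.continuous)]
    simp only [hinner]
    rw [DiffContOnCl.circleIntegral_sub_inv_smul, Fin.cons_self_tail, smul_smul, pow_succ']
    · exact ((hF.comp (differentiable_id.finCons (differentiable_const _))).const_smul
        _).diffContOnCl
    · exact hb 0

theorem torusIntegral_prod_prod_inv_sub_smul [CompleteSpace E] {ι : Type*} [Fintype ι]
    [DecidableEq ι] [Nonempty ι] {c : Fin n → ℂ} {R : Fin n → ℝ} {a : ι → ℂ} (ha : Injective a)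
    (hmem : ∀ k j, a j ∈ ball (c k) (R k)) {F : (Fin n → ℂ) → E} (hF : Differentiable ℂ F) :
    (∯ z in T(c, R), (∏ k, ∏ j, (z k - a j)⁻¹) • F z) =
      (2 * π * I : ℂ) ^ n • ∑ g : Fin n → ι, (∏ k, nodalWeight univ a (g k)) • F (a ∘ g) := by
  have hexpand (θ : Fin n → ℝ) :
      (∏ k, ∏ j, (torusMap c R θ k - a j)⁻¹) • F (torusMap c R θ) =
        ∑ g : Fin n → ι, (∏ k, (torusMap c R θ k - a (g k))⁻¹) •
          (∏ k, nodalWeight univ a (g k)) • F (torusMap c R θ) := by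
    have hpf (k : Fin n) := prod_inv_sub_eq_sum_nodalWeight_mul_inv_sub (x := torusMap c R θ k)
      ha.injOn univ_nonempty fun j _ => circleMap_ne_mem_ball (hmem k j) (θ k)
    simp_rw [hpf, Fintype.prod_sum, sum_smul, prod_mul_distrib,
      mul_comm (∏ k, nodalWeight _ _ _), mul_smul]
  have hweighted (g : Fin n → ι) :
      Differentiable ℂ fun z => (∏ k, nodalWeight univ a (g k)) • F z :=
    hF.const_smul _
  calc (∯ z in T(c, R), (∏ k, ∏ j, (z k - a j)⁻¹) • F z)
      = ∯ z in T(c, R), ∑ g : Fin n → ι,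
          (∏ k, (z k - a (g k))⁻¹) • (∏ k, nodalWeight univ a (g k)) • F z := by
        simp only [torusIntegral, hexpand]
    _ = _ := by
        rw [torusIntegral_finset_sum _ fun g _ => torusIntegrable_prod_inv_sub_smul
          (fun k => hmem k (g k)) (hweighted g).continuous, smul_sum]
        exact sum_congr rfl fun g _ =>
          torusIntegral_prod_inv_sub_smul (fun k => hmem k (g k)) (hweighted g)

end TorusIntegral

theorem cauchy_type_reproducing_formula (n : ℕ) (a : Fin n → ℂ)
    (ha_disk : ∀ j, ‖a j‖ < 1) (ha_inj : Function.Injective a)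
    (Q : (Fin n → ℂ) → ℂ) (hQ : AnalyticOn ℂ Q Set.univ)
    (hQsym : ∀ (σ : Equiv.Perm (Fin n)) (z : Fin n → ℂ), Q (z ∘ σ) = Q z) :
    (1 / (2 * (π : ℂ) * Complex.I)) ^ n *
      ∫ t in (Set.univ.pi fun _ : Fin n => Set.Ioc (0:ℝ) (2 * π)),
        ((∏ j : Fin n, ∏ k ∈ univ.filter (fun k => j < k),
            (Complex.exp ((t k : ℂ) * Complex.I) -
              Complex.exp ((t j : ℂ) * Complex.I))) ^ 2 *
          (∏ k : Fin n, ∏ j : Fin n,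
            (Complex.exp ((t k : ℂ) * Complex.I) - a j)⁻¹) *
          Q (fun k => Complex.exp ((t k : ℂ) * Complex.I)) *
          ∏ k : Fin n, (Complex.I * Complex.exp ((t k : ℂ) * Complex.I))) =
    (-1) ^ n.choose 2 * (n.factorial : ℂ) * Q a := by
  -- partial fractions need at least one pole
  obtain rfl | hn := eq_or_ne n 0
  · simp [Subsingleton.elim _ a, Measure.real, volume_pi]
  have : Nonempty (Fin n) := Fin.pos_iff_nonempty.1 (Nat.pos_of_ne_zero hn)
  set F : (Fin n → ℂ) → ℂ := fun z => (vandermonde z).det ^ 2 * Q z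
  have hF : Differentiable ℂ F :=
    (differentiable_det_vandermonde.pow 2).mul (differentiableOn_univ.1 hQ.differentiableOn)
  have hpoles (k j : Fin n) : a j ∈ ball ((0 : Fin n → ℂ) k) ((fun _ => (1 : ℝ)) k) := by
    simpa using ha_disk j
  have h2πI : (2 * π * I : ℂ) ≠ 0 := by simp [pi_ne_zero, I_ne_zero]
  calc _ = (1 / (2 * π * I : ℂ)) ^ n *
        ∯ z in T(0, fun _ => 1), (∏ k, ∏ j, (z k - a j)⁻¹) • F z := by
        rw [← setIntegral_pi_Ioc_eq_torusIntegral]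
        congr 1
        refine integral_congr_ae (ae_of_all _ fun θ => ?_)
        simp only [F, det_vandermonde, filter_lt_eq_Ioi, smul_eq_mul]
        ring
    _ = ∑ g : Fin n → Fin n, (∏ k, nodalWeight univ a (g k)) * F (a ∘ g) := by
        rw [torusIntegral_prod_prod_inv_sub_smul ha_inj hpoles hF, smul_eq_mul, ← mul_assoc,
          ← mul_pow, one_div_mul_cancel h2πI, one_pow, one_mul]
        simp only [F, smul_eq_mul]
    _ = _ := sum_prod_nodalWeight_mul_det_vandermonde_sq_mul ha_inj hQsym
end

section
/- For z,w in the unit disk and a = (a_1,...,a_n) ∈ 𝔻^n pairwise distinct, the Schur-complement conditional kernel of the Szegő kernel K(z,w) = 1/(1-z·conj(w)) satisfies: det((K(a_j,a_k))_{j,k}) · K^{a_1,...,a_n}(z,w) = |V(a)|^2 · S(a,a) · ∏_{i=1}^n (z - a_i)(conj(w) - conj(a_i)) · K(z,w) · ∏_{i=1}^n K(z,a_i) K(a_i,w), where S(a,a) = ∏_{j,k}(1-a_j conj(a_k))^{-1} and V is the Vandermonde determinant. -/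
/-!
Conditioning the Szegő kernel at one point `b` of the disk multiplies it by the factors that
vanish at `b`: `K^b(z,w) = (z - b) K(z,b) · (w̄ - b̄) K(b,w) · K(z,w)`. Conditioning a kernel of
the form `f(z) g(w) K(z,w)` at `b` (with `f b, g b ≠ 0`) only conditions `K`, so iterating gives
the product formula for `K^{a_1,…,a_n}`. Read as one step of Gaussian elimination on the Gram
matrix `(K(a_j,a_k))`, the same identity gives `det (K(a_j,a_k)) = |V(a)|² S(a,a)` by induction.
If the `a_j` are not distinct, `V(a) = 0` and both sides vanish.
-/

open Finset Complex

/-- Conditional (Schur complement) kernel: `K^a(z,w) = K(z,w) - K(z,a)K(a,w)/K(a,a)`. -/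
noncomputable def condKernel (K : ℂ → ℂ → ℂ) (a : ℂ) : ℂ → ℂ → ℂ :=
  fun z w => K z w - K z a * K a w / K a a

/-- Iterated conditional kernel `K^{a_0,…,a_{m-1}}`. -/
noncomputable def iterCondKernel (K : ℂ → ℂ → ℂ) (a : ℕ → ℂ) : ℕ → (ℂ → ℂ → ℂ)
  | 0 => K
  | m + 1 => condKernel (iterCondKernel K a m) (a m)

/-- The Szegő kernel of the unit disk. -/
noncomputable def szegoK (z w : ℂ) : ℂ := (1 - z * (starRingEnd ℂ) w)⁻¹

theorem one_sub_mul_conj_ne_zero {z w : ℂ} (hz : ‖z‖ < 1) (hw : ‖w‖ < 1) :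
    1 - z * (starRingEnd ℂ) w ≠ 0 := by
  have h : ‖z * (starRingEnd ℂ) w‖ < 1 := by
    rw [norm_mul, Complex.norm_conj]
    nlinarith [norm_nonneg z, norm_nonneg w]
  exact sub_ne_zero.mpr fun h₁ => by simp [← h₁] at h

theorem szegoK_ne_zero {z w : ℂ} (hz : ‖z‖ < 1) (hw : ‖w‖ < 1) : szegoK z w ≠ 0 :=
  inv_ne_zero (one_sub_mul_conj_ne_zero hz hw)

theorem condKernel_szegoK {b z w : ℂ} (hb : ‖b‖ < 1) (hz : ‖z‖ < 1) (hw : ‖w‖ < 1) :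
    condKernel szegoK b z w =
      ((z - b) * szegoK z b) * (((starRingEnd ℂ) w - (starRingEnd ℂ) b) * szegoK b w) *
        szegoK z w := by
  have h₁ := one_sub_mul_conj_ne_zero hz hw
  have h₂ := one_sub_mul_conj_ne_zero hz hb
  have h₃ := one_sub_mul_conj_ne_zero hb hw
  simp only [condKernel, szegoK, div_inv_eq_mul]
  rw [eq_comm]
  field_simp
  ring

theorem condKernel_eq_mul_of_eqOn {K L : ℂ → ℂ → ℂ} {f g : ℂ → ℂ} {U : Set ℂ}
    (hL : ∀ x ∈ U, ∀ y ∈ U, L x y = f x * g y * K x y) {b z w : ℂ} (hb : b ∈ U) (hz : z ∈ U)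
    (hw : w ∈ U) (hf : f b ≠ 0) (hg : g b ≠ 0) :
    condKernel L b z w = f z * g w * condKernel K b z w := by
  simp only [condKernel, hL z hz w hw, hL z hz b hb, hL b hb w hw, hL b hb b hb]
  rcases eq_or_ne (K b b) 0 with hK | hK
  · simp [hK]
  · field_simp

theorem det_eq_mul_det_condKernel {n : ℕ} (K : ℂ → ℂ → ℂ) (a : Fin (n + 1) → ℂ)
    (h₀ : K (a 0) (a 0) ≠ 0) :
    (Matrix.of fun j k => K (a j) (a k)).det =
      K (a 0) (a 0) * (Matrix.of fun j k : Fin n => condKernel K (a 0) (a j.succ) (a k.succ)).det := by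
  set B : Matrix (Fin (n + 1)) (Fin (n + 1)) ℂ := Matrix.of fun j k =>
    if j = 0 then K (a 0) (a k) else condKernel K (a 0) (a j) (a k)
  have hrow : (Matrix.of fun j k => K (a j) (a k)).det = B.det := by
    refine Matrix.det_eq_of_forall_row_eq_smul_add_const
      (fun j => if j = 0 then 0 else K (a j) (a 0) / K (a 0) (a 0)) 0 (by simp) fun j k => ?_
    by_cases hj : j = 0
    · simp [B, hj]
    · simp only [B, condKernel, Matrix.of_apply, if_neg hj, reduceIte]
      ring
  have hcol : ∀ j ≠ 0, B j 0 = 0 := fun j hj => by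
    simp [B, hj, condKernel, mul_div_assoc, h₀]
  rw [hrow, Matrix.det_succ_column_zero, Finset.sum_eq_single 0 (fun j _ hj => by simp [hcol j hj])
    (by simp)]
  simp [B, Matrix.submatrix]

theorem det_szegoK_gram {n : ℕ} (a : Fin n → ℂ) (ha : ∀ j, ‖a j‖ < 1) :
    (Matrix.of fun j k => szegoK (a j) (a k)).det =
      (∏ j, ∏ k ∈ Ioi j, (a k - a j)) * (starRingEnd ℂ) (∏ j, ∏ k ∈ Ioi j, (a k - a j)) *
        ∏ j, ∏ k, szegoK (a j) (a k) := by
  induction n with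
  | zero => simp
  | succ n ih =>
    set u : Fin n → ℂ := fun j => (a j.succ - a 0) * szegoK (a j.succ) (a 0)
    set v : Fin n → ℂ := fun k =>
      ((starRingEnd ℂ) (a k.succ) - (starRingEnd ℂ) (a 0)) * szegoK (a 0) (a k.succ)
    have hcond : (Matrix.of fun j k : Fin n => condKernel szegoK (a 0) (a j.succ) (a k.succ)) =
        Matrix.of fun j k => u j * (Matrix.of fun j k => v k *
          (Matrix.of fun j k : Fin n => szegoK (a j.succ) (a k.succ)) j k) j k := by
      ext j k
      simp only [Matrix.of_apply, condKernel_szegoK (ha 0) (ha j.succ) (ha k.succ), u, v]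
      ring
    rw [det_eq_mul_det_condKernel _ _ (szegoK_ne_zero (ha 0) (ha 0)), hcond,
      Matrix.det_mul_column, Matrix.det_mul_row, ih _ fun j => ha j.succ]
    simp only [Fin.prod_univ_succ, Fin.prod_Ioi_zero, Fin.prod_Ioi_succ, map_mul, map_prod,
      map_sub, u, v, Finset.prod_mul_distrib]
    ring

theorem iterCondKernel_szegoK (a : ℕ → ℂ) {m : ℕ} (ha : ∀ i < m, ‖a i‖ < 1)
    (hinj : Set.InjOn a (Set.Iio m)) {z w : ℂ} (hz : ‖z‖ < 1) (hw : ‖w‖ < 1) :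
    iterCondKernel szegoK a m z w =
      (∏ i ∈ range m, (z - a i) * szegoK z (a i)) *
        (∏ i ∈ range m, ((starRingEnd ℂ) w - (starRingEnd ℂ) (a i)) * szegoK (a i) w) *
          szegoK z w := by
  induction m generalizing z w with
  | zero => simp [iterCondKernel]
  | succ m ih =>
    have ha' : ∀ i < m, ‖a i‖ < 1 := fun i hi => ha i (Nat.lt_succ_of_lt hi)
    have ham : ‖a m‖ < 1 := ha m m.lt_succ_self
    have hne : ∀ i ∈ range m, a m ≠ a i := fun i hi =>
      hinj.ne m.lt_succ_self (Nat.lt_succ_of_lt (mem_range.mp hi)) (mem_range.mp hi).ne'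
    set f : ℂ → ℂ := fun x => ∏ i ∈ range m, (x - a i) * szegoK x (a i)
    set g : ℂ → ℂ := fun y =>
      ∏ i ∈ range m, ((starRingEnd ℂ) y - (starRingEnd ℂ) (a i)) * szegoK (a i) y
    have hf : f (a m) ≠ 0 :=
      prod_ne_zero_iff.mpr fun i hi =>
        mul_ne_zero (sub_ne_zero.mpr (hne i hi)) (szegoK_ne_zero ham (ha' i (mem_range.mp hi)))
    have hg : g (a m) ≠ 0 :=
      prod_ne_zero_iff.mpr fun i hi =>
        mul_ne_zero (sub_ne_zero.mpr ((starRingEnd ℂ).injective.ne (hne i hi)))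
          (szegoK_ne_zero (ha' i (mem_range.mp hi)) ham)
    have hstep : condKernel (iterCondKernel szegoK a m) (a m) z w =
        f z * g w * condKernel szegoK (a m) z w := by
      refine condKernel_eq_mul_of_eqOn (U := Metric.ball 0 1) (fun x hx y hy => ?_)
        (mem_ball_zero_iff.mpr ham) (mem_ball_zero_iff.mpr hz) (mem_ball_zero_iff.mpr hw) hf hg
      exact ih ha' (hinj.mono (Set.Iio_subset_Iio m.le_succ)) (mem_ball_zero_iff.mp hx)
        (mem_ball_zero_iff.mp hy)
    rw [iterCondKernel, hstep, condKernel_szegoK ham hz hw, prod_range_succ, prod_range_succ]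
    ring

theorem szego_iterCondKernel_formula_general (n : ℕ) (a : Fin n → ℂ)
    (ha_disk : ∀ j, ‖a j‖ < 1)
    (z w : ℂ) (hz : ‖z‖ < 1) (hw : ‖w‖ < 1) :
    Matrix.det (Matrix.of fun j k : Fin n => szegoK (a j) (a k)) *
      iterCondKernel szegoK (fun m => if h : m < n then a ⟨m, h⟩ else 0) n z w =
    ((‖∏ j : Fin n, ∏ k ∈ univ.filter (fun k => j < k),
        (a k - a j)‖ ^ 2 : ℝ) : ℂ) *
      (∏ j : Fin n, ∏ k : Fin n, (1 - a j * (starRingEnd ℂ) (a k))⁻¹) *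
      (∏ i : Fin n, (z - a i) * ((starRingEnd ℂ) w - (starRingEnd ℂ) (a i))) *
      szegoK z w *
      ∏ i : Fin n, szegoK z (a i) * szegoK (a i) w := by
  simp only [filter_lt_eq_Ioi]
  rw [Complex.sq_norm, ← Complex.mul_conj, det_szegoK_gram a ha_disk]
  by_cases ha_inj : Function.Injective a
  · set a' : ℕ → ℂ := fun m => if h : m < n then a ⟨m, h⟩ else 0
    have ha' : ∀ i : Fin n, a' i = a i := fun i => dif_pos i.isLt
    have hinj : Set.InjOn a' (Set.Iio n) := fun i hi j hj h => by
      simp only [a', dif_pos (Set.mem_Iio.mp hi), dif_pos (Set.mem_Iio.mp hj)] at h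
      exact Fin.mk.inj_iff.mp (ha_inj h)
    rw [iterCondKernel_szegoK a' (fun i hi => by simpa [a', hi] using ha_disk ⟨i, hi⟩) hinj hz hw]
    simp only [← Fin.prod_univ_eq_prod_range, ha', prod_mul_distrib, szegoK]
    ring
  · have hV : ∏ j : Fin n, ∏ k ∈ Ioi j, (a k - a j) = 0 := by
      rw [← Matrix.det_vandermonde]
      exact not_not.mp (mt Matrix.det_vandermonde_ne_zero_iff.mp ha_inj)
    simp [hV]

theorem szego_iterCondKernel_formula (n : ℕ) (a : Fin n → ℂ)
    (ha_disk : ∀ j, ‖a j‖ < 1) (ha_inj : Function.Injective a)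
    (z w : ℂ) (hz : ‖z‖ < 1) (hw : ‖w‖ < 1) :
    Matrix.det (Matrix.of fun j k : Fin n => szegoK (a j) (a k)) *
      iterCondKernel szegoK (fun m => if h : m < n then a ⟨m, h⟩ else 0) n z w =
    ((‖∏ j : Fin n, ∏ k ∈ univ.filter (fun k => j < k),
        (a k - a j)‖ ^ 2 : ℝ) : ℂ) *
      (∏ j : Fin n, ∏ k : Fin n, (1 - a j * (starRingEnd ℂ) (a k))⁻¹) *
      (∏ i : Fin n, (z - a i) * ((starRingEnd ℂ) w - (starRingEnd ℂ) (a i))) *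
      szegoK z w *
      ∏ i : Fin n, szegoK z (a i) * szegoK (a i) w :=
  szego_iterCondKernel_formula_general n a ha_disk z w hz hw
end
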